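/- Let γ ∈ (0,1), ε > 0, K ≥ 1. Suppose for each i = 1,…,K the sequences n_{i,t} → n_{i,∞} ≥ 0 (real) and ℓ_{i,t} → ℓ_{i,∞} (in ℝ^d), with Σ_{i=1}^K n_{i,∞} > 0. Define N_{i,0} = 0, m_{i,0} = c_0, N_{i,t+1} = γ N_{i,t} + (1-γ) n_{i,t} + ε, m_{i,t+1} = γ m_{i,t} + (1-γ) ℓ_{i,t}, and c_{i,t+1} = (m_{i,t+1} / (γ N_{i,t} + (1-γ) n_{i,t} + ε)) · ((Σ_j (γ N_{j,t} + (1-γ) n_{j,t}) + K ε) / (Σ_j (γ N_{j,t} + (1-γ) n_{j,t}))), assuming the last denominator is eventually positive. Then c_{i,t} converges, with limit c_{i,∞} = (ℓ_{i,∞} / (n_{i,∞} + γε/(1-γ) + ε)) · (Σ_j (n_{j,∞} + γε/(1-γ) + ε)) / (Σ_j (n_{j,∞} + γε/(1-γ))). -/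

import Mathlib

/-!
Each accumulator is a linear recursion `x (t + 1) = γ • x t + y t` with `|γ| < 1` driven by a
convergent input, so it converges to the fixed point `(1 - γ)⁻¹ • lim y`: the error `e t = x t - X`
obeys `‖e (t + 1)‖ ≤ |γ| ‖e t‖ + ‖y t - lim y‖`, and such a perturbed contraction tends to zero.
The normalized codes are then a continuous function of the accumulators at their limit, where every
denominator is positive.
-/

open Filter Topology

theorem tendsto_zero_of_le_mul_add {γ : ℝ} (hγ0 : 0 ≤ γ) (hγ1 : γ < 1) {u δ : ℕ → ℝ}
    (hu : ∀ t, 0 ≤ u t) (hrec : ∀ t, u (t + 1) ≤ γ * u t + δ t)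
    (hδ : Tendsto δ atTop (𝓝 0)) : Tendsto u atTop (𝓝 0) := by
  rw [Metric.tendsto_atTop]
  intro η hη
  obtain ⟨T, hT⟩ := eventually_atTop.1
    (hδ.eventually (gt_mem_nhds (show (0 : ℝ) < (1 - γ) * (η / 2) by nlinarith)))
  -- `η / 2` is a fixed point of `v ↦ γ v + (1 - γ) η / 2`, so it absorbs the perturbations.
  have hdecay : ∀ s, u (T + s) ≤ γ ^ s * u T + η / 2 := by
    intro s
    induction s with
    | zero => simp only [add_zero, pow_zero, one_mul]; linarith
    | succ s ih =>
      calc u (T + (s + 1)) ≤ γ * u (T + s) + δ (T + s) := hrec (T + s)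
        _ ≤ γ * (γ ^ s * u T + η / 2) + (1 - γ) * (η / 2) := by
          gcongr
          exact (hT _ (Nat.le_add_right T s)).le
        _ = γ ^ (s + 1) * u T + η / 2 := by ring
  obtain ⟨S, hS⟩ := eventually_atTop.1
    (((tendsto_pow_atTop_nhds_zero_of_lt_one hγ0 hγ1).mul_const (u T)).eventually
      (gt_mem_nhds (show (0 : ℝ) * u T < η / 2 by linarith)))
  refine ⟨T + S, fun t ht => ?_⟩
  obtain ⟨s, rfl⟩ := Nat.exists_eq_add_of_le (le_of_add_le_left ht)
  rw [Real.dist_eq, sub_zero, abs_of_nonneg (hu _)]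
  linarith [hdecay s, hS s (by omega)]

theorem tendsto_of_linear_recurrence {E : Type*} [NormedAddCommGroup E] [NormedSpace ℝ E]
    {γ : ℝ} (hγ : |γ| < 1) {x y : ℕ → E} {L : E}
    (hrec : ∀ t, x (t + 1) = γ • x t + y t) (hy : Tendsto y atTop (𝓝 L)) :
    Tendsto x atTop (𝓝 ((1 - γ)⁻¹ • L)) := by
  set X := (1 - γ)⁻¹ • L
  have hfix : γ • X + L = X := by
    have h1γ : 1 - γ ≠ 0 := by linarith [le_abs_self γ]
    calc γ • X + L = γ • X + (1 - γ) • X := by rw [smul_inv_smul₀ h1γ]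
      _ = X := by rw [← add_smul, add_sub_cancel, one_smul]
  have herr : Tendsto (fun t => ‖x t - X‖) atTop (𝓝 0) := by
    refine tendsto_zero_of_le_mul_add (abs_nonneg γ) hγ (fun t => norm_nonneg _) (fun t => ?_)
      (tendsto_iff_norm_sub_tendsto_zero.1 hy)
    calc ‖x (t + 1) - X‖ = ‖γ • (x t - X) + (y t - L)‖ := by
          rw [hrec, smul_sub]; nth_rewrite 1 [← hfix]; abel_nf
      _ ≤ |γ| * ‖x t - X‖ + ‖y t - L‖ := by
          grw [norm_add_le, norm_smul, Real.norm_eq_abs]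
  simpa using (tendsto_iff_norm_sub_tendsto_zero.2 herr)

theorem tendsto_of_ema_recurrence {E : Type*} [NormedAddCommGroup E] [NormedSpace ℝ E]
    {γ : ℝ} (hγ : |γ| < 1) {x y : ℕ → E} {L : E}
    (hrec : ∀ t, x (t + 1) = γ • x t + (1 - γ) • y t) (hy : Tendsto y atTop (𝓝 L)) :
    Tendsto x atTop (𝓝 L) := by
  have h1γ : 1 - γ ≠ 0 := by linarith [le_abs_self γ]
  simpa [smul_smul, inv_mul_cancel₀ h1γ] using
    tendsto_of_linear_recurrence hγ hrec (hy.const_smul (1 - γ))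

theorem tendsto_smoothed_count {γ ε : ℝ} (hγ : |γ| < 1) {N n : ℕ → ℝ} {ν : ℝ}
    (hrec : ∀ t, N (t + 1) = γ * N t + (1 - γ) * n t + ε) (hn : Tendsto n atTop (𝓝 ν)) :
    Tendsto (fun t => γ * N t + (1 - γ) * n t) atTop (𝓝 (ν + γ * ε / (1 - γ))) := by
  have h1γ : 1 - γ ≠ 0 := by linarith [le_abs_self γ]
  have hN := tendsto_of_linear_recurrence (x := N) hγ (fun t => by rw [hrec, smul_eq_mul]; ring)
    ((hn.const_mul (1 - γ)).add_const ε)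
  convert (hN.const_mul γ).add (hn.const_mul (1 - γ)) using 2
  rw [smul_eq_mul]
  field_simp
  ring

theorem ema_codebook_converges_general (d K : ℕ) (γ ε : ℝ)
    (hγ0 : 0 < γ) (hγ1 : γ < 1) (hε : 0 < ε)
    (n : Fin K → ℕ → ℝ) (nlim : Fin K → ℝ) (hnlim : ∀ i, 0 ≤ nlim i)
    (hn : ∀ i, Tendsto (n i) atTop (nhds (nlim i)))
    (ℓ : Fin K → ℕ → EuclideanSpace ℝ (Fin d)) (ℓlim : Fin K → EuclideanSpace ℝ (Fin d))
    (hℓ : ∀ i, Tendsto (ℓ i) atTop (nhds (ℓlim i)))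
    (hsum : 0 < ∑ j, nlim j)
    (N : Fin K → ℕ → ℝ) (m : Fin K → ℕ → EuclideanSpace ℝ (Fin d))
    (c : Fin K → ℕ → EuclideanSpace ℝ (Fin d))
    (hNrec : ∀ i t, N i (t + 1) = γ * N i t + (1 - γ) * n i t + ε)
    (hmrec : ∀ i t, m i (t + 1) = γ • m i t + (1 - γ) • ℓ i t)
    (hcrec : ∀ i t, c i (t + 1) =
      ((1 / (γ * N i t + (1 - γ) * n i t + ε)) *
        ((∑ j, (γ * N j t + (1 - γ) * n j t) + K * ε) /
          (∑ j, (γ * N j t + (1 - γ) * n j t)))) • m i (t + 1)) :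
    ∀ i, Tendsto (c i) atTop (nhds
      (((1 / (nlim i + γ * ε / (1 - γ) + ε)) *
        ((∑ j, (nlim j + γ * ε / (1 - γ) + ε)) /
          (∑ j, (nlim j + γ * ε / (1 - γ))))) • ℓlim i)) := by
  intro i
  have h1γ : 0 < 1 - γ := sub_pos.2 hγ1
  have hγ : |γ| < 1 := by rwa [abs_of_pos hγ0]
  have ha : 0 < γ * ε / (1 - γ) := by positivity
  have hD : ∀ j, Tendsto (fun t => γ * N j t + (1 - γ) * n j t) atTop
      (𝓝 (nlim j + γ * ε / (1 - γ))) := fun j => tendsto_smoothed_count hγ (hNrec j) (hn j)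
  have hS := tendsto_finsetSum Finset.univ fun j _ => hD j
  have hSpos : 0 < ∑ j, (nlim j + γ * ε / (1 - γ)) :=
    hsum.trans_le (Finset.sum_le_sum fun j _ => by linarith)
  have hsum_add : ∑ j, (nlim j + γ * ε / (1 - γ) + ε) =
      ∑ j, (nlim j + γ * ε / (1 - γ)) + K * ε := by
    simp [Finset.sum_add_distrib]
  refine (tendsto_add_atTop_iff_nat 1).1 ?_
  simp_rw [hcrec i]
  refine Tendsto.smul ?_ ((tendsto_of_ema_recurrence hγ (hmrec i) (hℓ i)).comp
    (tendsto_add_atTop_nat 1))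
  rw [hsum_add]
  exact (tendsto_const_nhds.div ((hD i).add_const ε) (by linarith [hnlim i])).mul
    ((hS.add_const _).div hS hSpos.ne')

/-- Convergence of the full EMA codebook update with Laplace smoothing
(Proposition 1 of the paper). -/
theorem ema_codebook_converges (d K : ℕ) (hK : 1 ≤ K) (γ ε : ℝ)
    (hγ0 : 0 < γ) (hγ1 : γ < 1) (hε : 0 < ε)
    (n : Fin K → ℕ → ℝ) (nlim : Fin K → ℝ) (hnlim : ∀ i, 0 ≤ nlim i)
    (hn : ∀ i, Tendsto (n i) atTop (nhds (nlim i)))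
    (ℓ : Fin K → ℕ → EuclideanSpace ℝ (Fin d)) (ℓlim : Fin K → EuclideanSpace ℝ (Fin d))
    (hℓ : ∀ i, Tendsto (ℓ i) atTop (nhds (ℓlim i)))
    (hsum : 0 < ∑ j, nlim j)
    (c₀ : EuclideanSpace ℝ (Fin d))
    (N : Fin K → ℕ → ℝ) (m : Fin K → ℕ → EuclideanSpace ℝ (Fin d))
    (c : Fin K → ℕ → EuclideanSpace ℝ (Fin d))
    (hN0 : ∀ i, N i 0 = 0) (hm0 : ∀ i, m i 0 = c₀)
    (hNrec : ∀ i t, N i (t + 1) = γ * N i t + (1 - γ) * n i t + ε)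
    (hmrec : ∀ i t, m i (t + 1) = γ • m i t + (1 - γ) • ℓ i t)
    (hden : ∀ᶠ t in atTop, 0 < ∑ j, (γ * N j t + (1 - γ) * n j t))
    (hcrec : ∀ i t, c i (t + 1) =
      ((1 / (γ * N i t + (1 - γ) * n i t + ε)) *
        ((∑ j, (γ * N j t + (1 - γ) * n j t) + K * ε) /
          (∑ j, (γ * N j t + (1 - γ) * n j t)))) • m i (t + 1)) :
    ∀ i, Tendsto (c i) atTop (nhds
      (((1 / (nlim i + γ * ε / (1 - γ) + ε)) *
        ((∑ j, (nlim j + γ * ε / (1 - γ) + ε)) /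
          (∑ j, (nlim j + γ * ε / (1 - γ))))) • ℓlim i)) :=
  ema_codebook_converges_general d K γ ε hγ0 hγ1 hε n nlim hnlim hn ℓ ℓlim hℓ hsum N m c hNrec hmrec
    hcrec
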